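/- arXiv:2008.10590 — 4 statements merged into one kernel-verified Lean document; each statement's English description precedes it below -/
import Mathlib

section
/- Let A be a unital associative ℂ-algebra with an ℕ-grading A = ⊕_{n∈ℕ} A_n such that A₊ⁿ = ⊕_{k≥n} A_k for every n ∈ ℕ, and let h ∈ A_1 be a central element. Let Â = lim_n A/A₊ⁿ, a ring, and let h̄ denote the image of h in Â. Then Â is h̄-adically separated and complete: ⋂_{m∈ℕ} h̄ᵐ Â = {0}, and the canonical ring homomorphism Â → lim_m (Â / h̄ᵐ Â) is bijective. -/
/-- The powers of a (two-sided) ideal `I` in the `ℂ`-algebra `A`, with the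
convention that the zeroth power is all of `A`. -/
def idealPow {A : Type*} [Ring A] [Algebra ℂ A] (I : Submodule ℂ A) : ℕ → Submodule ℂ A
  | 0 => ⊤
  | n + 1 => I * idealPow I n

/-- The inverse limit of a tower of rings `… → Q (n+1) → Q n → … → Q 0`, realized as the
subring of the product `∀ n, Q n` consisting of the families compatible under the
transition maps. -/
def limSubring {Q : ℕ → Type*} [∀ n, Ring (Q n)] (p : ∀ n, Q (n + 1) →+* Q n) :
    Subring (∀ n, Q n) where
  carrier := {y | ∀ n, p n (y (n + 1)) = y n}
  one_mem' := fun n => by simp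
  mul_mem' := fun {a b} ha hb n => by simp [Pi.mul_apply, map_mul, ha n, hb n]
  add_mem' := fun {a b} ha hb n => by simp [Pi.add_apply, map_add, ha n, hb n]
  zero_mem' := fun n => by simp
  neg_mem' := fun {a} ha n => by simp [Pi.neg_apply, map_neg, ha n]

/-- The canonical ring homomorphism from `R` to the inverse limit of a compatible tower of
quotients of `R`. -/
def toLim {R : Type*} [Ring R] {Q : ℕ → Type*} [∀ n, Ring (Q n)]
    (p : ∀ n, Q (n + 1) →+* Q n) (π : ∀ n, R →+* Q n)
    (hcomp : ∀ n, (p n).comp (π (n + 1)) = π n) : R →+* limSubring p where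
  toFun x := ⟨fun n => π n x, fun n => RingHom.congr_fun (hcomp n) x⟩
  map_one' := Subtype.ext (funext fun n => map_one (π n))
  map_mul' x y := Subtype.ext (funext fun n => map_mul (π n) x y)
  map_zero' := Subtype.ext (funext fun n => map_zero (π n))
  map_add' x y := Subtype.ext (funext fun n => map_add (π n) x y)

set_option maxHeartbeats 1000000 in
set_option synthInstance.maxHeartbeats 400000 in
/-- Let `A` be a unital associative `ℂ`-algebra with an `ℕ`-grading
`A = ⊕ₙ Aₙ` such that `A₊ⁿ = ⊕_{k ≥ n} A_k` for every `n`, and let `h ∈ A₁` be a central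
element.  Let `Â = lim_n A/A₊ⁿ` (here realized via an arbitrary compatible family of
quotient maps `π n : A → Q n` with kernel `A₊ⁿ`), and let `h̄` be the image of `h` in `Â`.
Then `Â` is `h̄`-adically separated and complete: `⋂ₘ h̄ᵐ Â = {0}`, and the canonical ring
homomorphism `Â → lim_m Â/h̄ᵐÂ` is bijective (the quotients `Â/h̄ᵐÂ` again being realized
via an arbitrary compatible family of quotient maps `π₂ m` with kernel `h̄ᵐÂ`). -/
theorem stmt1 {A : Type*} [Ring A] [Algebra ℂ A] (𝒜 : ℕ → Submodule ℂ A) [GradedAlgebra 𝒜]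
    (hpow : ∀ n : ℕ, idealPow (⨆ k ≥ 1, 𝒜 k) n = ⨆ k ≥ n, 𝒜 k)
    (h : A) (hh1 : h ∈ 𝒜 1) (hcentral : ∀ a : A, h * a = a * h)
    -- the quotients `A/A₊ⁿ` and the canonical projections between them
    (Q : ℕ → Type) [∀ n, Ring (Q n)] (π : ∀ n, A →+* Q n)
    (hsurj : ∀ n, Function.Surjective (π n))
    (hker : ∀ (n : ℕ) (a : A), π n a = 0 ↔ a ∈ idealPow (⨆ k ≥ 1, 𝒜 k) n)
    (p : ∀ n, Q (n + 1) →+* Q n) (hcomp : ∀ n, (p n).comp (π (n + 1)) = π n)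
    -- the quotients `Â/h̄ᵐÂ` and the canonical projections between them
    (Q₂ : ℕ → Type) [∀ m, Ring (Q₂ m)] (π₂ : ∀ m, limSubring p →+* Q₂ m)
    (hsurj₂ : ∀ m, Function.Surjective (π₂ m))
    (hker₂ : ∀ (m : ℕ) (x : limSubring p),
      π₂ m x = 0 ↔ ∃ y : limSubring p, x = (toLim p π hcomp h) ^ m * y)
    (p₂ : ∀ m, Q₂ (m + 1) →+* Q₂ m) (hcomp₂ : ∀ m, (p₂ m).comp (π₂ (m + 1)) = π₂ m) :
    (⋂ m : ℕ, Set.range (fun y : limSubring p => (toLim p π hcomp h) ^ m * y)) = {0} ∧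
      Function.Bijective (toLim p₂ π₂ hcomp₂) := by
  classical
  set I : Submodule ℂ A := ⨆ k ≥ 1, 𝒜 k with hIdef
  set H : limSubring p := toLim p π hcomp h with hHdef
  have hhI : h ∈ I := le_iSup₂ (f := fun k (_ : 1 ≤ k) => 𝒜 k) 1 le_rfl hh1
  have hhm : ∀ m : ℕ, h ^ m ∈ idealPow I m := by
    intro m
    induction m with
    | zero => simp [idealPow]
    | succ m ih =>
      rw [pow_succ']
      exact Submodule.mul_mem_mul hhI ih
  have hanti : ∀ {n m : ℕ}, n ≤ m → idealPow I m ≤ idealPow I n := by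
    intro n m hnm
    rw [hpow, hpow]
    exact iSup_le fun k => iSup_le fun hk => le_iSup₂_of_le k (hnm.trans hk) le_rfl
  have hπ0 : ∀ n m : ℕ, n ≤ m → π n (h ^ m) = 0 := fun n m hnm =>
    (hker n _).mpr (hanti hnm (hhm m))
  have hHval : ∀ n, (H : ∀ n, Q n) n = π n h := fun n => rfl
  have hcomp_val : ∀ (m : ℕ) (y : limSubring p) (n : ℕ),
      ((H ^ m * y : limSubring p) : ∀ n, Q n) n = π n (h ^ m) * (y : ∀ n, Q n) n := by
    intro m y n
    have : ((H ^ m * y : limSubring p) : ∀ n, Q n) n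
        = ((H : ∀ n, Q n) n) ^ m * (y : ∀ n, Q n) n := rfl
    rw [this, hHval, ← map_pow]
  -- Part 1
  have part1 : (⋂ m : ℕ, Set.range (fun y : limSubring p => H ^ m * y)) = {0} := by
    ext x
    simp only [Set.mem_iInter, Set.mem_range, Set.mem_singleton_iff]
    constructor
    · intro hx
      apply Subtype.ext
      funext n
      obtain ⟨y, hy⟩ := hx n
      have := congrArg (fun t : limSubring p => (t : ∀ n, Q n) n) hy
      rw [hcomp_val, hπ0 n n le_rfl, zero_mul] at this
      exact this.symm
    · rintro rfl
      exact fun m => ⟨0, by rw [mul_zero]⟩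
  refine ⟨part1, ?_, ?_⟩
  · -- injectivity
    rw [injective_iff_map_eq_zero]
    intro x hx
    have hx' : ∀ m, π₂ m x = 0 := by
      intro m
      have := congrArg (fun t : limSubring p₂ => (t : ∀ m, Q₂ m) m) hx
      exact this
    have hmem : x ∈ ⋂ m : ℕ, Set.range (fun y : limSubring p => H ^ m * y) := by
      simp only [Set.mem_iInter, Set.mem_range]
      intro m
      obtain ⟨y, hy⟩ := (hker₂ m x).mp (hx' m)
      exact ⟨y, hy.symm⟩
    rw [part1] at hmem
    exact hmem
  · -- surjectivity
    intro z
    choose x hx using fun m => hsurj₂ m ((z : ∀ m, Q₂ m) m)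
    have hdiff : ∀ m, π₂ m (x (m + 1) - x m) = 0 := by
      intro m
      have h1 : π₂ m (x (m + 1)) = (z : ∀ m, Q₂ m) m := by
        have h2 := RingHom.congr_fun (hcomp₂ m) (x (m + 1))
        rw [RingHom.comp_apply] at h2
        rw [← h2, hx (m + 1)]
        exact z.2 m
      rw [map_sub, h1, hx m, sub_self]
    choose y hy using fun m => (hker₂ m _).mp (hdiff m)
    have hcompn : ∀ m n, ((x (m + 1) : limSubring p) : ∀ n, Q n) n
        = ((x m : limSubring p) : ∀ n, Q n) n + π n (h ^ m) * ((y m : limSubring p) : ∀ n, Q n) n := by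
      intro m n
      have : x (m + 1) = x m + H ^ m * y m := by rw [← hy m]; abel
      rw [this]
      have h3 : ((x m + H ^ m * y m : limSubring p) : ∀ n, Q n) n
          = ((x m : limSubring p) : ∀ n, Q n) n + ((H ^ m * y m : limSubring p) : ∀ n, Q n) n := rfl
      rw [h3, hcomp_val]
    have htel : ∀ m k n, ((x (m + k) : limSubring p) : ∀ n, Q n) n
        = ((x m : limSubring p) : ∀ n, Q n) n
          + ∑ j ∈ Finset.range k, π n (h ^ (m + j)) * ((y (m + j) : limSubring p) : ∀ n, Q n) n := by
      intro m k
      induction k with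
      | zero => intro n; simp
      | succ k ih =>
        intro n
        rw [show m + (k + 1) = (m + k) + 1 from rfl, hcompn (m + k) n, ih n,
          Finset.sum_range_succ, add_assoc]
    set ξ : ∀ n, Q n := fun n => ((x n : limSubring p) : ∀ n, Q n) n with hξdef
    have hξstab : ∀ n m : ℕ, n ≤ m → ξ n = ((x m : limSubring p) : ∀ n, Q n) n := by
      intro n m hnm
      obtain ⟨k, rfl⟩ := Nat.exists_eq_add_of_le hnm
      rw [htel n k n]
      have : ∑ j ∈ Finset.range k, π n (h ^ (n + j)) * ((y (n + j) : limSubring p) : ∀ n, Q n) n = 0 := by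
        apply Finset.sum_eq_zero
        intro j _
        rw [hπ0 n (n + j) (Nat.le_add_right n j), zero_mul]
      rw [this, add_zero]
    have hξmem : ξ ∈ limSubring p := by
      intro n
      have h4 : ξ (n + 1) = ((x (n + 1) : limSubring p) : ∀ n, Q n) (n + 1) := rfl
      rw [h4, (x (n + 1)).2 n, hcompn n n, hπ0 n n le_rfl, zero_mul, add_zero]
    have hsmem : ∀ m : ℕ,
        (fun n => ∑ j ∈ Finset.range n, π n (h ^ j) * ((y (m + j) : limSubring p) : ∀ n, Q n) n)
          ∈ limSubring p := by
      intro m n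
      simp only
      rw [map_sum, Finset.sum_range_succ]
      have hlast : p n (π (n + 1) (h ^ n) * ((y (m + n) : limSubring p) : ∀ n, Q n) (n + 1)) = 0 := by
        rw [map_mul, ← RingHom.comp_apply, hcomp n, hπ0 n n le_rfl, zero_mul]
      rw [hlast, add_zero]
      apply Finset.sum_congr rfl
      intro j _
      rw [map_mul, ← RingHom.comp_apply, hcomp n, (y (m + j)).2 n]
    have hfin : ∀ m : ℕ, (⟨ξ, hξmem⟩ : limSubring p) - x m = H ^ m * ⟨_, hsmem m⟩ := by
      intro m
      apply Subtype.ext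
      funext n
      have hL : (((⟨ξ, hξmem⟩ : limSubring p) - x m : limSubring p) : ∀ n, Q n) n
          = ξ n - ((x m : limSubring p) : ∀ n, Q n) n := rfl
      rw [hL, hcomp_val]
      have h5 : ξ n = ((x (m + n) : limSubring p) : ∀ n, Q n) n :=
        hξstab n (m + n) (Nat.le_add_left n m)
      rw [h5, htel m n n, add_sub_cancel_left, Finset.mul_sum]
      apply Finset.sum_congr rfl
      intro j _
      rw [← mul_assoc, ← map_mul, ← pow_add]
    refine ⟨⟨ξ, hξmem⟩, ?_⟩
    apply Subtype.ext
    funext m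
    have h6 : π₂ m ((⟨ξ, hξmem⟩ : limSubring p) - x m) = 0 :=
      (hker₂ m _).mpr ⟨_, hfin m⟩
    rw [map_sub, hx m, sub_eq_zero] at h6
    show π₂ m (⟨ξ, hξmem⟩ : limSubring p) = (z : ∀ m, Q₂ m) m
    exact h6
end

section
/- Let A be a unital associative ℂ-algebra with an ℕ-grading A = ⊕_{n∈ℕ} A_n such that A₊ⁿ = ⊕_{k≥n} A_k for every n ∈ ℕ, and let h ∈ A_1 be a central element such that multiplication by h on A is injective (h·a = 0 implies a = 0). Let Â = lim_n A/A₊ⁿ and let h̄ be the image of h in Â. Then multiplication by h̄ on Â is injective: h̄·x = 0 implies x = 0 for all x ∈ Â. -/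
lemma mem_iSup_ge_iff {A : Type*} [Ring A] [Algebra ℂ A] (𝒜 : ℕ → Submodule ℂ A)
    [GradedAlgebra 𝒜] (n : ℕ) (a : A) :
    a ∈ (⨆ k ≥ n, 𝒜 k : Submodule ℂ A) ↔ ∀ j < n, (DirectSum.decompose 𝒜 a j : A) = 0 := by
  classical
  constructor
  · intro ha j hj
    rw [iSup_subtype'] at ha
    induction ha using Submodule.iSup_induction' with
    | mem k b hb =>
      exact DirectSum.decompose_of_mem_ne 𝒜 hb (by omega : (k : ℕ) ≠ j) ▸ rfl
    | zero => simp
    | add b c _ _ hb hc => simp [DirectSum.decompose_add, hb, hc]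
  · intro hj
    rw [← DirectSum.sum_support_decompose 𝒜 a]
    apply Submodule.sum_mem
    intro i hi
    by_cases hin : n ≤ i
    · exact Submodule.mem_iSup_of_mem i (Submodule.mem_iSup_of_mem hin (SetLike.coe_mem _))
    · exact absurd (Subtype.ext_iff.mpr (hj i (not_le.mp hin)))
        (by simpa using DFinsupp.mem_support_iff.mp hi)

/-- Let `A` be a unital associative `ℂ`-algebra with an `ℕ`-grading
`A = ⊕ₙ Aₙ` such that `A₊ⁿ = ⊕_{k ≥ n} A_k` for every `n`, and let `h ∈ A₁` be a central
element such that multiplication by `h` on `A` is injective.  Let `Â = lim_n A/A₊ⁿ`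
(realized via an arbitrary compatible family of quotient maps `π n : A → Q n` with kernel
`A₊ⁿ`), and let `h̄` be the image of `h` in `Â`.  Then multiplication by `h̄` on `Â` is
injective: `h̄ · x = 0` implies `x = 0`. -/
theorem stmt2 {A : Type*} [Ring A] [Algebra ℂ A] (𝒜 : ℕ → Submodule ℂ A) [GradedAlgebra 𝒜]
    (hpow : ∀ n : ℕ, idealPow (⨆ k ≥ 1, 𝒜 k) n = ⨆ k ≥ n, 𝒜 k)
    (h : A) (hh1 : h ∈ 𝒜 1) (hcentral : ∀ a : A, h * a = a * h)
    (hinj : ∀ a : A, h * a = 0 → a = 0)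
    (Q : ℕ → Type) [∀ n, Ring (Q n)] (π : ∀ n, A →+* Q n)
    (hsurj : ∀ n, Function.Surjective (π n))
    (hker : ∀ (n : ℕ) (a : A), π n a = 0 ↔ a ∈ idealPow (⨆ k ≥ 1, 𝒜 k) n)
    (p : ∀ n, Q (n + 1) →+* Q n) (hcomp : ∀ n, (p n).comp (π (n + 1)) = π n) :
    ∀ x : limSubring p, (toLim p π hcomp h) * x = 0 → x = 0 := by
  
  intro x hx
  ext m
  obtain ⟨a, ha⟩ := hsurj (m + 1) ((x : ∀ n, Q n) (m + 1))
  have hxm : π m a = (x : ∀ n, Q n) m := by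
    have := x.2 m
    rw [← this, ← ha, ← RingHom.comp_apply, hcomp m]
  have hmul : π (m + 1) (h * a) = 0 := by
    have := congrArg (fun y : limSubring p => (y : ∀ n, Q n) (m + 1)) hx
    simp only [Subring.coe_mul, Pi.mul_apply, ZeroMemClass.coe_zero, Pi.zero_apply] at this
    rw [map_mul, ha]
    exact this
  have hha : h * a ∈ (⨆ k ≥ m + 1, 𝒜 k : Submodule ℂ A) := by
    rw [← hpow]; exact (hker _ _).mp hmul
  rw [mem_iSup_ge_iff] at hha
  have haA : a ∈ (⨆ k ≥ m, 𝒜 k : Submodule ℂ A) := by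
    rw [mem_iSup_ge_iff]
    intro j hj
    apply hinj
    have := hha (j + 1) (by omega)
    rwa [DirectSum.coe_decompose_mul_of_left_mem_of_le 𝒜 hh1 (by omega : 1 ≤ j + 1),
      Nat.add_sub_cancel] at this
  have hz : π m a = 0 := (hker m a).mpr (by rw [hpow]; exact haA)
  rw [hxm] at hz
  simp [hz]
end

section
/- Let 𝔤 be a Lie algebra over ℂ equipped with a symmetric invariant ℂ-bilinear form B (symmetric: B(x,y) = B(y,x); invariant: B([x,y],z) = B(x,[y,z])), and let A be a commutative ℂ-algebra. Let ε be the ℂ-bilinear map on 𝔤 ⊗_ℂ A with values in z(A) = Ω_{A/ℂ}/d(A) determined by ε(x⊗a, y⊗b) = [B(x,y)·b·d(a)] for x,y ∈ 𝔤 and a,b ∈ A. Then ε is skew-symmetric, and it satisfies the cocycle equation ε(u,[v,w]) + ε(v,[w,u]) + ε(w,[u,v]) = 0 for all u, v, w ∈ 𝔤 ⊗_ℂ A, where the bracket is [x⊗a, y⊗b] = [x,y] ⊗ ab. -/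
open scoped TensorProduct

set_option synthInstance.maxHeartbeats 1000000
set_option maxHeartbeats 1000000

/-- Let `𝔤` be a Lie algebra over `ℂ` with a symmetric invariant
bilinear form `B`, and let `A` be a commutative `ℂ`-algebra.  Let
`z(A) = Ω_{A/ℂ}/d(A)` be the quotient of the module of Kähler differentials by the
`ℂ`-linear span of the image of the universal derivation `d`.  The `ℂ`-bilinear map `ε`
on `𝔤 ⊗ A` with values in `z(A)` determined by `ε(x ⊗ a, y ⊗ b) = [B(x,y)·b·d(a)]` is
skew-symmetric and satisfies the cocycle equation
`ε(u,[v,w]) + ε(v,[w,u]) + ε(w,[u,v]) = 0`, for the bracket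
`[x ⊗ a, y ⊗ b] = [x,y] ⊗ ab` (realized via the base-change Lie algebra `A ⊗[ℂ] 𝔤`). -/
theorem stmt14 (𝔤 : Type*) [LieRing 𝔤] [LieAlgebra ℂ 𝔤]
    (A : Type*) [CommRing A] [Algebra ℂ A]
    (B : 𝔤 →ₗ[ℂ] 𝔤 →ₗ[ℂ] ℂ)
    (hsymm : ∀ x y : 𝔤, B x y = B y x)
    (hinv : ∀ x y z : 𝔤, B ⁅x, y⁆ z = B x ⁅y, z⁆)
    (ε : (A ⊗[ℂ] 𝔤) →ₗ[ℂ] (A ⊗[ℂ] 𝔤) →ₗ[ℂ]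
      (KaehlerDifferential ℂ A ⧸
        Submodule.span ℂ (Set.range (⇑(KaehlerDifferential.D ℂ A) : A → KaehlerDifferential ℂ A))))
    (hε : ∀ (x y : 𝔤) (a b : A),
      ε (a ⊗ₜ[ℂ] x) (b ⊗ₜ[ℂ] y) =
        Submodule.Quotient.mk (B x y • (b • KaehlerDifferential.D ℂ A a))) :
    (∀ u v : A ⊗[ℂ] 𝔤, ε u v = - ε v u) ∧
    ∀ u v w : A ⊗[ℂ] 𝔤, ε u ⁅v, w⁆ + ε v ⁅w, u⁆ + ε w ⁅u, v⁆ = 0 := by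
  have hzero : ∀ (c : ℂ) (a : A),
      (Submodule.Quotient.mk (c • KaehlerDifferential.D ℂ A a) : KaehlerDifferential ℂ A ⧸
        Submodule.span ℂ (Set.range (⇑(KaehlerDifferential.D ℂ A) : A → KaehlerDifferential ℂ A)))
        = 0 :=
    fun c a => (Submodule.Quotient.mk_eq_zero _).mpr
      (Submodule.smul_mem _ _ (Submodule.subset_span ⟨a, rfl⟩))
  have key1 : ∀ (a b : A) (x y : 𝔤),
      ε (a ⊗ₜ[ℂ] x) (b ⊗ₜ[ℂ] y) + ε (b ⊗ₜ[ℂ] y) (a ⊗ₜ[ℂ] x) = 0 := by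
    intro a b x y
    rw [hε, hε, hsymm y x, ← Submodule.Quotient.mk_add]
    have h : B x y • (b • KaehlerDifferential.D ℂ A a) +
        B x y • (a • KaehlerDifferential.D ℂ A b)
        = B x y • KaehlerDifferential.D ℂ A (a * b) := by
      rw [Derivation.leibniz]; module
    rw [h]; exact hzero _ _
  have key2 : ∀ (a b c : A) (x y z : 𝔤),
      ε (a ⊗ₜ[ℂ] x) ⁅b ⊗ₜ[ℂ] y, c ⊗ₜ[ℂ] z⁆ + ε (b ⊗ₜ[ℂ] y) ⁅c ⊗ₜ[ℂ] z, a ⊗ₜ[ℂ] x⁆ +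
        ε (c ⊗ₜ[ℂ] z) ⁅a ⊗ₜ[ℂ] x, b ⊗ₜ[ℂ] y⁆ = 0 := by
    intro a b c x y z
    rw [LieAlgebra.ExtendScalars.bracket_tmul, LieAlgebra.ExtendScalars.bracket_tmul,
      LieAlgebra.ExtendScalars.bracket_tmul, hε, hε, hε]
    have h1 : B y ⁅z, x⁆ = B x ⁅y, z⁆ := by rw [← hinv, hsymm]
    have h2 : B z ⁅x, y⁆ = B x ⁅y, z⁆ := by rw [hsymm z ⁅x, y⁆, hinv]
    rw [h1, h2, ← Submodule.Quotient.mk_add, ← Submodule.Quotient.mk_add]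
    have h : B x ⁅y, z⁆ • ((b * c) • KaehlerDifferential.D ℂ A a) +
        B x ⁅y, z⁆ • ((c * a) • KaehlerDifferential.D ℂ A b) +
        B x ⁅y, z⁆ • ((a * b) • KaehlerDifferential.D ℂ A c)
        = B x ⁅y, z⁆ • KaehlerDifferential.D ℂ A (a * b * c) := by
      rw [Derivation.leibniz, Derivation.leibniz]; module
    rw [h]; exact hzero _ _
  have hskew : ∀ u v : A ⊗[ℂ] 𝔤, ε u v + ε v u = 0 := by
    intro u v
    induction u using TensorProduct.induction_on with
    | zero => simp
    | tmul a x =>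
      induction v using TensorProduct.induction_on with
      | zero => simp
      | tmul b y => exact key1 a b x y
      | add v1 v2 h1 h2 =>
        simp only [map_add, LinearMap.add_apply]
        rw [add_add_add_comm, h1, h2, add_zero]
    | add u1 u2 h1 h2 =>
      simp only [map_add, LinearMap.add_apply]
      rw [add_add_add_comm, h1, h2, add_zero]
  have hreassoc : ∀ p1 p2 q1 q2 r1 r2 : KaehlerDifferential ℂ A ⧸
      Submodule.span ℂ (Set.range (⇑(KaehlerDifferential.D ℂ A) : A → KaehlerDifferential ℂ A)),
      p1 + p2 + (q1 + q2) + (r1 + r2) = (p1 + q1 + r1) + (p2 + q2 + r2) :=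
    fun _ _ _ _ _ _ => by abel
  refine ⟨fun u v => eq_neg_of_add_eq_zero_left (hskew u v), ?_⟩
  intro u v w
  induction u using TensorProduct.induction_on with
  | zero => simp
  | tmul a x =>
    induction v using TensorProduct.induction_on with
    | zero => simp
    | tmul b y =>
      induction w using TensorProduct.induction_on with
      | zero => simp
      | tmul c z => exact key2 a b c x y z
      | add w1 w2 h1 h2 =>
        simp only [lie_add, add_lie, map_add, LinearMap.add_apply]
        rw [hreassoc, h1, h2, add_zero]
    | add v1 v2 h1 h2 =>
      simp only [lie_add, add_lie, map_add, LinearMap.add_apply]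
      rw [hreassoc, h1, h2, add_zero]
  | add u1 u2 h1 h2 =>
    simp only [lie_add, add_lie, map_add, LinearMap.add_apply]
    rw [hreassoc, h1, h2, add_zero]
end

section
/- Let B = ℂ[v^{±1}, t] be the ring of polynomials in t with coefficients in the Laurent polynomial ring ℂ[v^{±1}], and let z(B) = Ω_{B/ℂ}/d(B). Then z(B) has a ℂ-basis consisting of the elements K_{r,s} := (1/s)·[v^{r−1} tˢ d(v)] for r ∈ ℤ and integers s ≥ 1, together with c_v := [v⁻¹ d(v)]. In particular z(B) = ⊕_{(r,s)∈ℤ×ℕ₊} ℂ·K_{r,s} ⊕ ℂ·c_v. -/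
/-- The monomial `vʳtˢ` (with `r ∈ ℤ`, `s ∈ ℕ`) in the mixed Laurent/polynomial ring
`ℂ[v^{±1}, t]`, realized as `AddMonoidAlgebra ℂ (ℤ × ℕ)`. -/
noncomputable def monMixed (r : ℤ) (s : ℕ) : AddMonoidAlgebra ℂ (ℤ × ℕ) :=
  AddMonoidAlgebra.single (r, s) 1

/-- The class of a Kähler differential of `B = ℂ[v^{±1}, t]` in `z(B) = Ω_{B/ℂ}/d(B)`,
the quotient of `Ω_{B/ℂ}` by the `ℂ`-linear span of the image of the universal
derivation `d`. -/
noncomputable def zClassMixed (ω : KaehlerDifferential ℂ (AddMonoidAlgebra ℂ (ℤ × ℕ))) :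
    KaehlerDifferential ℂ (AddMonoidAlgebra ℂ (ℤ × ℕ)) ⧸
      Submodule.span ℂ (Set.range
        (⇑(KaehlerDifferential.D ℂ (AddMonoidAlgebra ℂ (ℤ × ℕ))) :
          AddMonoidAlgebra ℂ (ℤ × ℕ) → KaehlerDifferential ℂ (AddMonoidAlgebra ℂ (ℤ × ℕ)))) :=
  Submodule.Quotient.mk ω


noncomputable section
namespace Stmt17

abbrev BB := AddMonoidAlgebra ℂ (ℤ × ℕ)

lemma bb_induction {p : BB → Prop} (x : BB) (h0 : p 0)
    (hadd : ∀ f g : BB, p f → p g → p (f + g))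
    (hs : ∀ (a : ℤ × ℕ) (c : ℂ), p (AddMonoidAlgebra.single a c)) : p x :=
  AddMonoidAlgebra.induction_linear x h0 hadd hs

section lsum
variable {N : Type*} [AddCommMonoid N] [Module ℂ N]

def clsum (u : ℤ × ℕ → N) : BB →ₗ[ℂ] N :=
  (Finsupp.lsum ℂ fun q => LinearMap.toSpanSingleton ℂ N (u q)) ∘ₗ
    (AddMonoidAlgebra.coeffLinearEquiv ℂ).toLinearMap

lemma clsum_single (u : ℤ × ℕ → N) (p : ℤ × ℕ) (c : ℂ) :
    clsum u (AddMonoidAlgebra.single p c) = c • u p := by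
  rw [clsum, LinearMap.comp_apply]
  erw [Finsupp.lsum_single]
  rfl

end lsum

def pdvL : BB →ₗ[ℂ] BB :=
  clsum fun p => AddMonoidAlgebra.single (p.1 - 1, p.2) (p.1 : ℂ)

def pdtL : BB →ₗ[ℂ] BB :=
  clsum fun p => AddMonoidAlgebra.single (p.1, p.2 - 1) (p.2 : ℂ)

lemma pdvL_single (p : ℤ × ℕ) (c : ℂ) :
    pdvL (AddMonoidAlgebra.single p c) = AddMonoidAlgebra.single (p.1 - 1, p.2) (c * p.1) := by
  rw [pdvL, clsum_single]
  simp [Finsupp.smul_single, smul_eq_mul]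

lemma pdtL_single (p : ℤ × ℕ) (c : ℂ) :
    pdtL (AddMonoidAlgebra.single p c) = AddMonoidAlgebra.single (p.1, p.2 - 1) (c * p.2) := by
  rw [pdtL, clsum_single]
  simp [Finsupp.smul_single, smul_eq_mul]

lemma pdvL_leibniz (x y : BB) : pdvL (x * y) = x * pdvL y + y * pdvL x := by
  induction x using bb_induction with
  | h0 => simp
  | hadd f g hf hg =>
    simp only [add_mul, map_add, hf, hg, mul_add]
    ring
  | hs p c =>
    induction y using bb_induction with
    | h0 => simp
    | hadd f g hf hg =>
      simp only [mul_add, map_add, hf, hg, add_mul]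
      ring
    | hs q e =>
      rw [AddMonoidAlgebra.single_mul_single, pdvL_single, pdvL_single, pdvL_single,
        AddMonoidAlgebra.single_mul_single, AddMonoidAlgebra.single_mul_single]
      rw [show (p + q : ℤ × ℕ) = (p.1 + q.1, p.2 + q.2) from rfl]
      rw [show p + (q.1 - 1, q.2) = (p.1 + q.1 - 1, p.2 + q.2) by
        simp [Prod.ext_iff]; omega]
      rw [show q + (p.1 - 1, p.2) = (p.1 + q.1 - 1, p.2 + q.2) by
        simp [Prod.ext_iff]; omega]
      rw [← AddMonoidAlgebra.single_add]
      congr 1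
      push_cast
      ring

lemma pdtL_leibniz (x y : BB) : pdtL (x * y) = x * pdtL y + y * pdtL x := by
  induction x using bb_induction with
  | h0 => simp
  | hadd f g hf hg =>
    simp only [add_mul, map_add, hf, hg, mul_add]
    ring
  | hs p c =>
    induction y using bb_induction with
    | h0 => simp
    | hadd f g hf hg =>
      simp only [mul_add, map_add, hf, hg, add_mul]
      ring
    | hs q e =>
      rw [AddMonoidAlgebra.single_mul_single, pdtL_single, pdtL_single, pdtL_single,
        AddMonoidAlgebra.single_mul_single, AddMonoidAlgebra.single_mul_single]
      rw [show (p + q : ℤ × ℕ) = (p.1 + q.1, p.2 + q.2) from rfl]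
      rcases Nat.eq_zero_or_pos p.2 with hp | hp
      · rcases Nat.eq_zero_or_pos q.2 with hq | hq
        · simp [hp, hq]
        · rw [show p + (q.1, q.2 - 1) = (p.1 + q.1, p.2 + q.2 - 1) by
            simp [Prod.ext_iff]; omega]
          simp only [hp, Nat.cast_zero, mul_zero, AddMonoidAlgebra.single_zero, add_zero, zero_add]
          congr 1
          push_cast [hp]
          ring
      · rcases Nat.eq_zero_or_pos q.2 with hq | hq
        · rw [show q + (p.1, p.2 - 1) = (p.1 + q.1, p.2 + q.2 - 1) by
            simp [Prod.ext_iff]; omega]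
          simp only [hq, Nat.cast_zero, mul_zero, AddMonoidAlgebra.single_zero, add_zero, zero_add]
          congr 1
          push_cast [hq]
          ring
        · rw [show p + (q.1, q.2 - 1) = (p.1 + q.1, p.2 + q.2 - 1) by
            simp [Prod.ext_iff]; omega]
          rw [show q + (p.1, p.2 - 1) = (p.1 + q.1, p.2 + q.2 - 1) by
            simp [Prod.ext_iff]; omega]
          rw [← AddMonoidAlgebra.single_add]
          congr 1
          have : (↑(p.2 + q.2) : ℂ) = p.2 + q.2 := by push_cast; ring
          rw [this]
          have h1 : ((q.2 : ℂ)) = ((q.2 : ℕ) : ℂ) := rfl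
          push_cast
          ring

end Stmt17

namespace Stmt17
open AddMonoidAlgebra

def Dv : Derivation ℂ BB BB where
  toLinearMap := pdvL
  map_one_eq_zero' := by
    have : (1 : BB) = AddMonoidAlgebra.single 0 1 := rfl
    rw [this, pdvL_single]
    simp
  leibniz' := fun a b => by
    simp only [smul_eq_mul, LinearMap.coe_mk, AddHom.coe_mk]
    exact pdvL_leibniz a b

def Dt : Derivation ℂ BB BB where
  toLinearMap := pdtL
  map_one_eq_zero' := by
    have : (1 : BB) = AddMonoidAlgebra.single 0 1 := rfl
    rw [this, pdtL_single]
    simp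
  leibniz' := fun a b => by
    simp only [smul_eq_mul, LinearMap.coe_mk, AddHom.coe_mk]
    exact pdtL_leibniz a b

end Stmt17

namespace Stmt17

abbrev ΩB := KaehlerDifferential ℂ BB

def dd : Derivation ℂ BB ΩB := KaehlerDifferential.D ℂ BB

def vB : BB := AddMonoidAlgebra.single (1, 0) 1
def wB : BB := AddMonoidAlgebra.single (-1, 0) 1
def tB : BB := AddMonoidAlgebra.single ((0 : ℤ), (1 : ℕ)) 1

lemma vw : vB * wB = 1 := by
  rw [vB, wB, AddMonoidAlgebra.single_mul_single]
  norm_num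
  rfl

lemma dd_w : dd wB = AddMonoidAlgebra.single ((-2 : ℤ), (0 : ℕ)) (-1 : ℂ) • dd vB := by
  have h0 : dd (vB * wB) = 0 := by rw [vw]; exact dd.map_one_eq_zero
  rw [dd.leibniz] at h0
  have h1 := congrArg (fun m => wB • m) h0
  simp only [smul_add, smul_smul, smul_zero] at h1
  have hwv : wB * vB = 1 := by rw [mul_comm]; exact vw
  rw [hwv, one_smul] at h1
  have hww : wB * wB = AddMonoidAlgebra.single ((-2 : ℤ), (0 : ℕ)) (1 : ℂ) := by
    rw [wB, AddMonoidAlgebra.single_mul_single]; norm_num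
  rw [hww] at h1
  have := eq_neg_of_add_eq_zero_left h1
  rw [this]
  rw [show (AddMonoidAlgebra.single ((-2 : ℤ), (0 : ℕ)) (-1 : ℂ)) =
    -(AddMonoidAlgebra.single ((-2 : ℤ), (0 : ℕ)) (1 : ℂ)) by simp]
  rw [neg_smul]

lemma single_smul_add {M : Type*} [AddCommMonoid M] [Module BB M] (q : ℤ × ℕ) (c₁ c₂ : ℂ)
    (X : M) :
    AddMonoidAlgebra.single q c₁ • X + AddMonoidAlgebra.single q c₂ • X =
      AddMonoidAlgebra.single q (c₁ + c₂) • X := by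
  rw [AddMonoidAlgebra.single_add, add_smul]

lemma single_mul_eq (p q r : ℤ × ℕ) (c e f : ℂ) (h1 : p + q = r) (h2 : c * e = f) :
    (AddMonoidAlgebra.single p c : BB) * AddMonoidAlgebra.single q e =
      AddMonoidAlgebra.single r f := by
  subst h1; subst h2; exact AddMonoidAlgebra.single_mul_single ..

lemma single_smul_congr {M : Type*} [AddCommMonoid M] [Module BB M] (q r : ℤ × ℕ)
    (c f : ℂ) (X : M) (h1 : q = r) (h2 : c = f) :
    AddMonoidAlgebra.single q c • X = AddMonoidAlgebra.single r f • X := by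
  subst h1; subst h2; rfl

lemma dd_vpow (a : ℤ) :
    dd (AddMonoidAlgebra.single (a, (0 : ℕ)) (1 : ℂ)) =
      AddMonoidAlgebra.single (a - 1, (0 : ℕ)) (a : ℂ) • dd vB := by
  induction a using Int.induction_on with
  | zero =>
    have : (AddMonoidAlgebra.single ((0 : ℤ), (0 : ℕ)) (1 : ℂ) : BB) = 1 := rfl
    rw [this, dd.map_one_eq_zero]
    simp
  | succ k ih =>
    have hsplit : (AddMonoidAlgebra.single ((k : ℤ) + 1, (0 : ℕ)) (1 : ℂ) : BB) =
        AddMonoidAlgebra.single ((k : ℤ), (0 : ℕ)) (1 : ℂ) * vB :=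
      (single_mul_eq _ _ _ _ _ _ (by simp) (by norm_num)).symm
    rw [hsplit, dd.leibniz, ih, smul_smul]
    rw [show vB * AddMonoidAlgebra.single ((k : ℤ) - 1, (0 : ℕ)) (((k : ℤ) : ℂ)) =
        AddMonoidAlgebra.single ((k : ℤ), (0 : ℕ)) (((k : ℤ) : ℂ)) from
      single_mul_eq _ _ _ _ _ _ (by simp [Prod.ext_iff]; try ring) (by norm_num)]
    rw [single_smul_add]
    exact single_smul_congr _ _ _ _ _ (by norm_num) (by push_cast; ring)
  | pred k ih =>
    have hsplit : (AddMonoidAlgebra.single (-(k : ℤ) - 1, (0 : ℕ)) (1 : ℂ) : BB) =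
        AddMonoidAlgebra.single (-(k : ℤ), (0 : ℕ)) (1 : ℂ) * wB :=
      (single_mul_eq _ _ _ _ _ _ (by simp [Prod.ext_iff, wB]; try ring) (by norm_num)).symm
    rw [hsplit, dd.leibniz, ih, dd_w, smul_smul, smul_smul]
    rw [show (AddMonoidAlgebra.single (-(k : ℤ), (0 : ℕ)) (1 : ℂ) : BB) *
        AddMonoidAlgebra.single ((-2 : ℤ), (0 : ℕ)) (-1 : ℂ) =
        AddMonoidAlgebra.single (-(k : ℤ) - 2, (0 : ℕ)) (-1 : ℂ) from
      single_mul_eq _ _ _ _ _ _ (by simp [Prod.ext_iff]; try ring) (by norm_num)]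
    rw [show wB * AddMonoidAlgebra.single (-(k : ℤ) - 1, (0 : ℕ)) ((Int.cast (-(k : ℤ)) : ℂ)) =
        AddMonoidAlgebra.single (-(k : ℤ) - 2, (0 : ℕ)) ((Int.cast (-(k : ℤ)) : ℂ)) from
      single_mul_eq _ _ _ _ _ _ (by simp [wB, Prod.ext_iff]; try ring) (by norm_num)]
    rw [single_smul_add]
    exact single_smul_congr _ _ _ _ _ (by simp [Prod.ext_iff]; try ring) (by push_cast; ring)

end Stmt17

namespace Stmt17

lemma dd_tpow (b : ℕ) :
    dd (AddMonoidAlgebra.single ((0 : ℤ), b) (1 : ℂ)) =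
      AddMonoidAlgebra.single ((0 : ℤ), b - 1) ((b : ℕ) : ℂ) • dd tB := by
  induction b with
  | zero =>
    have : (AddMonoidAlgebra.single ((0 : ℤ), (0 : ℕ)) (1 : ℂ) : BB) = 1 := rfl
    rw [this, dd.map_one_eq_zero]
    simp
  | succ b ih =>
    have hsplit : (AddMonoidAlgebra.single ((0 : ℤ), b + 1) (1 : ℂ) : BB) =
        AddMonoidAlgebra.single ((0 : ℤ), b) (1 : ℂ) * tB :=
      (single_mul_eq _ _ _ _ _ _ (by simp) (by norm_num)).symm
    rw [hsplit, dd.leibniz, ih, smul_smul]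
    rcases Nat.eq_zero_or_pos b with hb | hb
    · subst hb
      simp
    · rw [show tB * AddMonoidAlgebra.single ((0 : ℤ), b - 1) ((b : ℕ) : ℂ) =
          AddMonoidAlgebra.single ((0 : ℤ), b) ((b : ℕ) : ℂ) from
        single_mul_eq _ _ _ _ _ _ (by simp [tB, Prod.ext_iff]; omega) (by norm_num)]
      rw [single_smul_add]
      exact single_smul_congr _ _ _ _ _ (by simp) (by push_cast; ring)

end Stmt17

namespace Stmt17

lemma dd_single (a : ℤ) (b : ℕ) (c : ℂ) :
    dd (AddMonoidAlgebra.single (a, b) c) =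
      AddMonoidAlgebra.single (a - 1, b) (c * a) • dd vB +
        AddMonoidAlgebra.single (a, b - 1) (c * b) • dd tB := by
  have hsplit : (AddMonoidAlgebra.single (a, b) c : BB) =
      c • (AddMonoidAlgebra.single (a, (0 : ℕ)) (1 : ℂ) *
        AddMonoidAlgebra.single ((0 : ℤ), b) (1 : ℂ)) := by
    rw [single_mul_eq _ _ (a, b) _ _ (1 : ℂ) (by simp) (by norm_num)]
    rw [AddMonoidAlgebra.smul_single']
    norm_num
  rw [hsplit, dd.map_smul, dd.leibniz, dd_vpow, dd_tpow, smul_smul, smul_smul]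
  rw [show (AddMonoidAlgebra.single (a, (0 : ℕ)) (1 : ℂ) : BB) *
      AddMonoidAlgebra.single ((0 : ℤ), b - 1) ((b : ℕ) : ℂ) =
      AddMonoidAlgebra.single (a, b - 1) ((b : ℕ) : ℂ) from
    single_mul_eq _ _ _ _ _ _ (by simp) (by norm_num)]
  rw [show (AddMonoidAlgebra.single ((0 : ℤ), b) (1 : ℂ) : BB) *
      AddMonoidAlgebra.single (a - 1, (0 : ℕ)) ((a : ℂ)) =
      AddMonoidAlgebra.single (a - 1, b) ((a : ℂ)) from
    single_mul_eq _ _ _ _ _ _ (by simp [Prod.ext_iff]; try ring) (by norm_num)]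
  rw [smul_add, ← smul_assoc, ← smul_assoc, AddMonoidAlgebra.smul_single', AddMonoidAlgebra.smul_single']
  rw [add_comm]

end Stmt17

namespace Stmt17

def Φ : ΩB →ₗ[BB] BB × BB :=
  (Dv.liftKaehlerDifferential).prod (Dt.liftKaehlerDifferential)

lemma Φ_D (x : BB) : Φ (dd x) = (pdvL x, pdtL x) := by
  have h1 : Dv.liftKaehlerDifferential (dd x) = Dv x :=
    Derivation.liftKaehlerDifferential_comp_D Dv x
  have h2 : Dt.liftKaehlerDifferential (dd x) = Dt x :=
    Derivation.liftKaehlerDifferential_comp_D Dt x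
  simp only [Φ, LinearMap.prod_apply, Function.prod]
  rw [h1, h2]
  rfl

def jmap : BB × BB →ₗ[BB] ΩB :=
  (LinearMap.toSpanSingleton BB ΩB (dd vB)).comp (LinearMap.fst BB BB BB) +
    (LinearMap.toSpanSingleton BB ΩB (dd tB)).comp (LinearMap.snd BB BB BB)

lemma jmap_apply (p q : BB) : jmap (p, q) = p • dd vB + q • dd tB := rfl

lemma dd_eq_j (x : BB) : dd x = jmap (pdvL x, pdtL x) := by
  induction x using bb_induction with
  | h0 => simp [jmap_apply]
  | hadd f g hf hg =>
    rw [dd.map_add, hf, hg, ← map_add jmap]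
    congr 1
    rw [Prod.mk_add_mk, map_add, map_add]
  | hs p c =>
    obtain ⟨a, b⟩ := p
    rw [dd_single, pdvL_single, pdtL_single, jmap_apply]

lemma j_Phi (ω : ΩB) : jmap (Φ ω) = ω := by
  have h : (jmap.comp Φ) = (LinearMap.id : ΩB →ₗ[BB] ΩB) := by
    apply Derivation.liftKaehlerDifferential_unique
    apply Derivation.ext
    intro x
    show jmap (Φ (dd x)) = dd x
    rw [Φ_D, ← dd_eq_j]
  exact congrArg (fun f => f ω) h

end Stmt17

namespace Stmt17

abbrev VV := ((ℤ × ℕ+) ⊕ Unit) →₀ ℂ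

def uvE : ℤ × ℕ → VV := fun p =>
  if h : 0 < p.2 then Finsupp.single (Sum.inl (p.1 + 1, ⟨p.2, h⟩)) ((p.2 : ℕ) : ℂ)
  else if p.1 = -1 then Finsupp.single (Sum.inr ()) 1 else 0

def utE : ℤ × ℕ → VV := fun p =>
  Finsupp.single (Sum.inl (p.1, ⟨p.2 + 1, Nat.succ_pos _⟩)) (-(p.1 : ℂ))

def ψ : BB × BB →ₗ[ℂ] VV :=
  (clsum uvE).comp (LinearMap.fst ℂ BB BB) + (clsum utE).comp (LinearMap.snd ℂ BB BB)

lemma ψ_apply (f g : BB) : ψ (f, g) = clsum uvE f + clsum utE g := rfl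

def φm : ΩB →ₗ[ℂ] VV := ψ.comp (Φ.restrictScalars ℂ)

lemma φm_apply (ω : ΩB) : φm ω = ψ (Φ ω) := rfl

lemma vsingle_congr (i j : (ℤ × ℕ+) ⊕ Unit) (c f : ℂ) (h1 : i = j) (h2 : c = f) :
    (Finsupp.single i c : VV) = Finsupp.single j f := by subst h1; subst h2; rfl

lemma φm_dd (x : BB) : φm (dd x) = 0 := by
  induction x using bb_induction with
  | h0 => simp
  | hadd f g hf hg => rw [dd.map_add, map_add, hf, hg, add_zero]
  | hs p c =>
    obtain ⟨a, b⟩ := p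
    rw [φm_apply]
    rw [show Φ (dd (AddMonoidAlgebra.single (a, b) c)) = (pdvL (AddMonoidAlgebra.single (a, b) c),
      pdtL (AddMonoidAlgebra.single (a, b) c)) from Φ_D _]
    rw [pdvL_single, pdtL_single, ψ_apply, clsum_single, clsum_single]
    rcases b with _ | n
    · simp only [Nat.cast_zero, mul_zero, zero_smul, add_zero]
      rcases eq_or_ne a 0 with ha | ha
      · subst ha; simp
      · rw [uvE]
        simp only [show ¬ (0 < ((a, (0:ℕ)).1 - 1, (a, (0:ℕ)).2).2) from by simp]
        rw [dif_neg (by simp)]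
        rw [if_neg (by simpa using sub_ne_zero.mpr ha ∘ fun h => by omega)]
        simp
    · rw [uvE, utE]
      rw [dif_pos (by simp : 0 < ((a - 1, n + 1) : ℤ × ℕ).2)]
      simp only [Finsupp.smul_single']
      rw [vsingle_congr (Sum.inl ((a,n+1).1 - 1 + 1, ⟨n+1, by simp⟩)) (Sum.inl (a, ⟨n+1, Nat.succ_pos n⟩))
        _ (c * a * (n+1)) (by simp [Prod.ext_iff]; try ring) (by push_cast; ring)]
      simp only [Nat.add_sub_cancel]
      rw [← Finsupp.single_add]
      rw [show c * ↑a * (↑n + 1) + c * ↑(n+1) * -↑a = (0:ℂ) by push_cast; ring]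
      exact Finsupp.single_zero _

end Stmt17

namespace Stmt17

def Kel : (ℤ × ℕ+) ⊕ Unit → ΩB
  | Sum.inl (r, s) => (((s : ℕ) : ℂ))⁻¹ •
      (AddMonoidAlgebra.single (r - 1, (s : ℕ)) (1 : ℂ) • dd vB)
  | Sum.inr _ => AddMonoidAlgebra.single ((-1 : ℤ), (0 : ℕ)) (1 : ℂ) • dd vB

def σm : VV →ₗ[ℂ] ΩB :=
  Finsupp.lsum ℂ fun i => LinearMap.toSpanSingleton ℂ ΩB (Kel i)

lemma σm_single (i : (ℤ × ℕ+) ⊕ Unit) (c : ℂ) :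
    σm (Finsupp.single i c) = c • Kel i := by
  rw [σm]
  erw [Finsupp.lsum_single]
  rfl

lemma Φ_ddvB : Φ (dd vB) = (1, 0) := by
  rw [show Φ (dd vB) = (pdvL vB, pdtL vB) from Φ_D _]
  rw [vB, pdvL_single, pdtL_single]
  norm_num
  rfl

lemma φm_smul_ddvB (x : BB) : φm (x • dd vB) = clsum uvE x := by
  rw [φm_apply, map_smul, Φ_ddvB, Prod.smul_mk, smul_eq_mul, smul_eq_mul, mul_one, mul_zero,
    ψ_apply, map_zero, add_zero]

lemma φm_K (i : (ℤ × ℕ+) ⊕ Unit) : φm (Kel i) = Finsupp.single i 1 := by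
  rcases i with ⟨r, s⟩ | u
  · rw [Kel, map_smul, φm_smul_ddvB, clsum_single, one_smul, uvE]
    rw [dif_pos (by exact s.pos : 0 < ((r - 1, (s:ℕ)) : ℤ × ℕ).2)]
    rw [Finsupp.smul_single']
    refine vsingle_congr _ _ _ _ ?_ ?_
    · congr 1
      simp only [Prod.mk.injEq]
      exact Prod.ext (by ring) rfl
    · exact inv_mul_cancel₀ (by exact_mod_cast s.ne_zero)
  · rw [Kel, φm_smul_ddvB, clsum_single, one_smul, uvE]
    rw [dif_neg (by simp)]
    rw [if_pos rfl]

end Stmt17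

namespace Stmt17

def θf : ℤ × ℕ → BB := fun p =>
  if p.2 = 0 ∧ p.1 ≠ -1 then
    AddMonoidAlgebra.single (p.1 + 1, (0 : ℕ)) (((p.1 : ℂ) + 1))⁻¹ else 0

def θg : ℤ × ℕ → BB := fun p =>
  AddMonoidAlgebra.single (p.1, p.2 + 1) (((p.2 : ℂ) + 1))⁻¹

def Θm : BB × BB →ₗ[ℂ] BB :=
  (clsum θf).comp (LinearMap.fst ℂ BB BB) + (clsum θg).comp (LinearMap.snd ℂ BB BB)

lemma Θm_apply (f g : BB) : Θm (f, g) = clsum θf f + clsum θg g := rfl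

def EK : (ℤ × ℕ+) ⊕ Unit → BB × BB
  | Sum.inl (r, s) => (AddMonoidAlgebra.single (r - 1, (s : ℕ)) ((((s : ℕ) : ℂ))⁻¹), 0)
  | Sum.inr _ => (AddMonoidAlgebra.single ((-1 : ℤ), (0 : ℕ)) (1 : ℂ), 0)

def Em : VV →ₗ[ℂ] BB × BB :=
  Finsupp.lsum ℂ fun i => LinearMap.toSpanSingleton ℂ (BB × BB) (EK i)

lemma Em_single (i : (ℤ × ℕ+) ⊕ Unit) (c : ℂ) :
    Em (Finsupp.single i c) = c • EK i := by
  rw [Em]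
  erw [Finsupp.lsum_single]
  rfl

lemma bsingle_congr (p q : ℤ × ℕ) (c f : ℂ) (h1 : p = q) (h2 : c = f) :
    (AddMonoidAlgebra.single p c : BB) = AddMonoidAlgebra.single q f := by
  subst h1; subst h2; rfl

lemma main_id_f (a : ℤ) (b : ℕ) (c : ℂ) :
    (pdvL (Θm (AddMonoidAlgebra.single (a, b) c, 0)),
      pdtL (Θm (AddMonoidAlgebra.single (a, b) c, 0))) =
    ((AddMonoidAlgebra.single (a, b) c : BB), (0 : BB)) -
      Em (ψ (AddMonoidAlgebra.single (a, b) c, 0)) := by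
  rw [Θm_apply, map_zero, add_zero, clsum_single, ψ_apply, map_zero, add_zero, clsum_single]
  rcases b with _ | n
  · rcases eq_or_ne a (-1) with ha | ha
    · subst ha
      rw [θf, if_neg (by simp), smul_zero, map_zero, map_zero, uvE]
      rw [dif_neg (by simp), if_pos rfl, Finsupp.smul_single', mul_one, Em_single, EK]
      rw [Prod.smul_mk, smul_zero, AddMonoidAlgebra.smul_single', mul_one]
      rw [Prod.mk_sub_mk, sub_self, sub_zero]
    · rw [θf, if_pos ⟨rfl, ha⟩, uvE, dif_neg (by simp), if_neg (by simpa using ha),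
        smul_zero, map_zero, sub_zero, AddMonoidAlgebra.smul_single']
      rw [pdvL_single, pdtL_single]
      simp only [Nat.cast_zero, mul_zero]
      rw [Prod.mk.injEq]
      refine ⟨?_, AddMonoidAlgebra.single_zero _⟩
      refine bsingle_congr _ _ _ _ (by simp) ?_
      have hne : ((a : ℂ) + 1) ≠ 0 := by
        intro h
        apply ha
        have h2 : ((a : ℂ)) = -1 := eq_neg_of_add_eq_zero_left h
        have : ((a : ℂ)) = ((-1 : ℤ) : ℂ) := by push_cast; exact h2
        exact_mod_cast this
      push_cast
      field_simp
  · -- b = n + 1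
    rw [θf, if_neg (by simp), smul_zero, map_zero, map_zero, uvE,
      dif_pos (by simp : 0 < ((a, n+1) : ℤ × ℕ).2), Finsupp.smul_single', Em_single, EK.eq_def]
    dsimp only
    rw [Prod.smul_mk, smul_zero, AddMonoidAlgebra.smul_single']
    rw [Prod.mk_sub_mk, sub_zero, Prod.mk.injEq]
    refine ⟨?_, rfl⟩
    rw [eq_comm, sub_eq_zero]
    refine bsingle_congr _ _ _ _ (by simp) ?_
    have hne : ((n : ℂ) + 1) ≠ 0 := Nat.cast_add_one_ne_zero n
    push_cast
    field_simp
    simp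

end Stmt17

namespace Stmt17

lemma main_id_g (a : ℤ) (b : ℕ) (c : ℂ) :
    (pdvL (Θm (0, AddMonoidAlgebra.single (a, b) c)),
      pdtL (Θm (0, AddMonoidAlgebra.single (a, b) c))) =
    ((0 : BB), (AddMonoidAlgebra.single (a, b) c : BB)) -
      Em (ψ (0, AddMonoidAlgebra.single (a, b) c)) := by
  rw [Θm_apply, map_zero, zero_add, clsum_single, ψ_apply, map_zero, zero_add, clsum_single]
  rw [θg, utE, Finsupp.smul_single', AddMonoidAlgebra.smul_single', Em_single, EK.eq_def]
  dsimp only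
  rw [Prod.smul_mk, smul_zero, AddMonoidAlgebra.smul_single']
  rw [pdvL_single, pdtL_single, Prod.mk_sub_mk, sub_zero, zero_sub, Prod.mk.injEq]
  have hne : ((b : ℂ) + 1) ≠ 0 := Nat.cast_add_one_ne_zero b
  constructor
  · rw [← AddMonoidAlgebra.single_neg]
    refine bsingle_congr _ _ _ _ (by simp) ?_
    simp only [PNat.mk_coe]
    push_cast
    field_simp
    try ring
  · refine bsingle_congr _ _ _ _ (by simp) ?_
    push_cast
    field_simp

def Λm : BB × BB →ₗ[ℂ] BB × BB := (pdvL.comp Θm).prod (pdtL.comp Θm)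

lemma Λm_apply (e : BB × BB) : Λm e = (pdvL (Θm e), pdtL (Θm e)) := rfl

lemma main_id_f' (f : BB) : Λm (f, 0) = (f, 0) - Em (ψ (f, 0)) := by
  induction f using bb_induction with
  | h0 => rw [Prod.mk_zero_zero]; simp
  | hadd x y hx hy =>
    have h1 : ((x + y : BB), (0 : BB)) = (x, (0:BB)) + (y, (0:BB)) := by
      rw [Prod.mk_add_mk, add_zero]
    rw [h1, map_add, map_add, map_add, hx, hy]
    abel
  | hs p c =>
    obtain ⟨a, b⟩ := p
    rw [Λm_apply]
    exact main_id_f a b c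

lemma main_id_g' (g : BB) : Λm (0, g) = (0, g) - Em (ψ (0, g)) := by
  induction g using bb_induction with
  | h0 => rw [Prod.mk_zero_zero]; simp
  | hadd x y hx hy =>
    have h1 : ((0 : BB), (x + y : BB)) = ((0:BB), x) + ((0:BB), y) := by
      rw [Prod.mk_add_mk, add_zero]
    rw [h1, map_add, map_add, map_add, hx, hy]
    abel
  | hs p c =>
    obtain ⟨a, b⟩ := p
    rw [Λm_apply]
    exact main_id_g a b c

lemma main_id (e : BB × BB) : Λm e = e - Em (ψ e) := by
  obtain ⟨f, g⟩ := e
  have h2 : ((f, g) : BB × BB) = (f, (0:BB)) + ((0:BB), g) := by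
    rw [Prod.mk_add_mk, add_zero, zero_add]
  rw [h2, map_add, map_add, map_add, main_id_f' f, main_id_g' g]
  abel

end Stmt17

namespace Stmt17

lemma exact_of_phi_zero (ω : ΩB) (h : φm ω = 0) : ∃ x : BB, dd x = ω := by
  refine ⟨Θm (Φ ω), ?_⟩
  have h1 : Φ (dd (Θm (Φ ω))) = (pdvL (Θm (Φ ω)), pdtL (Θm (Φ ω))) := Φ_D _
  have h2 : ((pdvL (Θm (Φ ω)), pdtL (Θm (Φ ω))) : BB × BB) = Λm (Φ ω) := rfl
  have h3 : Λm (Φ ω) = Φ ω := by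
    rw [main_id]
    have : ψ (Φ ω) = φm ω := rfl
    rw [this, h, map_zero, sub_zero]
  have h4 : Φ (dd (Θm (Φ ω))) = Φ ω := by rw [h1, h2, h3]
  have := congrArg jmap h4
  rwa [j_Phi, j_Phi] at this

def WW : Submodule ℂ ΩB :=
  Submodule.span ℂ (Set.range
    (⇑(KaehlerDifferential.D ℂ (AddMonoidAlgebra ℂ (ℤ × ℕ))) :
      AddMonoidAlgebra ℂ (ℤ × ℕ) → KaehlerDifferential ℂ (AddMonoidAlgebra ℂ (ℤ × ℕ))))

lemma hW : WW ≤ LinearMap.ker φm := by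
  rw [WW, Submodule.span_le]
  rintro _ ⟨x, rfl⟩
  exact φm_dd x

def φq : (ΩB ⧸ WW) →ₗ[ℂ] VV := WW.liftQ φm hW

def σq : VV →ₗ[ℂ] (ΩB ⧸ WW) := WW.mkQ.comp σm

lemma φσ (v : VV) : φm (σm v) = v := by
  induction v using Finsupp.induction_linear with
  | zero => simp
  | add f g hf hg => rw [map_add, map_add, hf, hg]
  | single i c => rw [σm_single, map_smul, φm_K, Finsupp.smul_single', mul_one]

lemma hcomp1 : φq.comp σq = LinearMap.id := by
  apply LinearMap.ext
  intro v
  show φq (WW.mkQ (σm v)) = v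
  rw [Submodule.mkQ_apply, φq, Submodule.liftQ_apply, φσ]

lemma hcomp2 : σq.comp φq = LinearMap.id := by
  apply LinearMap.ext
  intro ω'
  obtain ⟨ω, rfl⟩ := WW.mkQ_surjective ω'
  show σq (φq (WW.mkQ ω)) = WW.mkQ ω
  rw [Submodule.mkQ_apply, φq, Submodule.liftQ_apply]
  show WW.mkQ (σm (φm ω)) = Submodule.Quotient.mk ω
  rw [Submodule.mkQ_apply]
  rw [Submodule.Quotient.eq]
  have hz : φm (σm (φm ω) - ω) = 0 := by
    rw [map_sub, φσ, sub_self]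
  obtain ⟨x, hx⟩ := exact_of_phi_zero _ hz
  rw [← hx]
  exact Submodule.subset_span ⟨x, rfl⟩

def eqv : (ΩB ⧸ WW) ≃ₗ[ℂ] VV := LinearEquiv.ofLinear φq σq hcomp1 hcomp2

def bas : Module.Basis ((ℤ × ℕ+) ⊕ Unit) ℂ (ΩB ⧸ WW) := Module.Basis.ofRepr eqv

lemma bas_apply (i : (ℤ × ℕ+) ⊕ Unit) :
    bas i = Submodule.Quotient.mk (Kel i) := by
  have h1 : bas i = eqv.symm (Finsupp.single i 1) := by
    rw [bas]
    rfl
  rw [h1]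
  show σq (Finsupp.single i 1) = _
  rw [σq, LinearMap.comp_apply, σm_single, one_smul, Submodule.mkQ_apply]

end Stmt17

/-- Let `B = ℂ[v^{±1}, t]` and `z(B) = Ω_{B/ℂ}/d(B)`.  Then `z(B)` has
a `ℂ`-basis consisting of the elements `K_{r,s} = (1/s)·[v^{r-1}tˢ d(v)]` for `r ∈ ℤ`
and integers `s ≥ 1`, together with `c_v = [v⁻¹ d(v)]`. -/
theorem stmt17 :
    ∃ b : Module.Basis ((ℤ × ℕ+) ⊕ Unit) ℂ
        (KaehlerDifferential ℂ (AddMonoidAlgebra ℂ (ℤ × ℕ)) ⧸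
          Submodule.span ℂ (Set.range
            (⇑(KaehlerDifferential.D ℂ (AddMonoidAlgebra ℂ (ℤ × ℕ))) :
              AddMonoidAlgebra ℂ (ℤ × ℕ) → KaehlerDifferential ℂ (AddMonoidAlgebra ℂ (ℤ × ℕ))))),
      (∀ (r : ℤ) (s : ℕ+),
        b (Sum.inl (r, s)) = (((s : ℕ) : ℂ)⁻¹) • zClassMixed (monMixed (r - 1) s •
          KaehlerDifferential.D ℂ (AddMonoidAlgebra ℂ (ℤ × ℕ)) (monMixed 1 0))) ∧
      b (Sum.inr ()) = zClassMixed (monMixed (-1) 0 •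
        KaehlerDifferential.D ℂ (AddMonoidAlgebra ℂ (ℤ × ℕ)) (monMixed 1 0)) := by
  refine ⟨Stmt17.bas, ?_, ?_⟩
  · intro r s
    refine (Stmt17.bas_apply (Sum.inl (r, s))).trans ?_
    show Submodule.Quotient.mk (Stmt17.Kel (Sum.inl (r, s))) = _
    rw [Stmt17.Kel, Submodule.Quotient.mk_smul]
    rfl
  · refine (Stmt17.bas_apply (Sum.inr ())).trans ?_
    rfl
end
end
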